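/- arXiv:1812.01546 — 7 statements merged into one kernel-verified Lean document; each statement's English description precedes it below -/
import Mathlib

section
/- Let A be a finite alphabet and let R be a topological Markov chain on A that is primitive, i.e., there exists κ ≥ 1 such that for all α, β ∈ A there is a word u ∈ A^κ with αuβ R-admissible. Then there exists a positive integer d such that for every n ≥ 1 the set of circularly R-admissible words of length n is step d strongly connected in the digraph whose vertex set is the set of R-admissible words of length n and whose arrows are the de Bruijn transitions between them. -/
/-- De Bruijn transition between words of length `n`: `a'ᵢ = aᵢ₊₁` for all `1 ≤ i ≤ n-1`
(the last letter of `a'` is arbitrary). -/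
def deBruijnTrans {A : Type*} {n : ℕ} (a a' : Fin n → A) : Prop :=
  ∀ i : Fin n, (h : i.val + 1 < n) → a' i = a ⟨i.val + 1, h⟩

/-- A word is `R`-admissible if all its consecutive transitions are in `R`. -/
def IsAdm {A : Type*} (R : A → A → Prop) {n : ℕ} (a : Fin n → A) : Prop :=
  ∀ i : Fin n, (h : i.val + 1 < n) → R (a i) (a ⟨i.val + 1, h⟩)

/-- A word is circularly `R`-admissible if all its consecutive transitions,
including the wrap-around one, are in `R`. -/
def IsCircAdm {A : Type*} (R : A → A → Prop) {n : ℕ} (a : Fin n → A) : Prop :=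
  ∀ i : Fin n, R (a i) (a ⟨(i.val + 1) % n, Nat.mod_lt _ i.pos⟩)

/-- There is a directed path of length at most `d` from `x` to `y` for the relation `r`. -/
def PathLe {V : Type*} (r : V → V → Prop) (d : ℕ) (x y : V) : Prop :=
  ∃ k ≤ d, ∃ f : ℕ → V, f 0 = x ∧ f k = y ∧ ∀ i < k, r (f i) (f (i + 1))

namespace CWaux

variable {A : Type*}

/-- window of length n starting at s in the infinite word z -/
def win (z : ℕ → A) (n s : ℕ) : Fin n → A := fun i => z (s + i.val)

theorem circ_adm {R : A → A → Prop} {n : ℕ} {a : Fin n → A} (h : IsCircAdm R a) :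
    IsAdm R a := by
  intro i hi
  have := h i
  have e : (⟨(i.val + 1) % n, Nat.mod_lt _ i.pos⟩ : Fin n) = ⟨i.val + 1, hi⟩ :=
    Fin.ext (Nat.mod_eq_of_lt hi)
  rwa [e] at this

theorem win_adm {R : A → A → Prop} {z : ℕ → A} (hz : ∀ p, R (z p) (z (p+1)))
    (n s : ℕ) : IsAdm R (win z n s) := by
  intro i hi
  have := hz (s + i.val)
  have e : s + i.val + 1 = s + (i.val + 1) := by omega
  rw [e] at this
  exact this

theorem win_circ_of_eq {R : A → A → Prop} {z : ℕ → A} (hz : ∀ p, R (z p) (z (p+1)))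
    {n s : ℕ} (heq : z (s + n) = z s) : IsCircAdm R (win z n s) := by
  intro i
  rcases Nat.lt_or_ge (i.val + 1) n with h | h
  · have := hz (s + i.val)
    have e : s + i.val + 1 = s + ((i.val + 1) % n) := by
      rw [Nat.mod_eq_of_lt h]; omega
    rw [e] at this
    exact this
  · have hi : i.val + 1 = n := by omega
    have := hz (s + i.val)
    have e : s + i.val + 1 = s + n := by omega
    rw [e, heq] at this
    have e2 : (⟨(i.val + 1) % n, Nat.mod_lt _ i.pos⟩ : Fin n) = ⟨0, i.pos⟩ :=
      Fin.ext (by show (i.val + 1) % n = 0; rw [hi, Nat.mod_self])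
    show R (win z n s i) (win z n s ⟨(i.val+1) % n, Nat.mod_lt _ i.pos⟩)
    rw [e2]
    exact this

/-- the step relation of the theorem -/
def Rel (R : A → A → Prop) (d n : ℕ) :
    {w : Fin n → A // IsAdm R w} → {w : Fin n → A // IsAdm R w} → Prop :=
  fun u v => IsCircAdm R u.val ∧ IsCircAdm R v.val ∧
    PathLe (fun p q => deBruijnTrans p.val q.val) d u v

theorem hop {R : A → A → Prop} {z : ℕ → A} (hz : ∀ p, R (z p) (z (p+1)))
    {n s k d : ℕ} (hk : k ≤ d)
    (h1 : IsCircAdm R (win z n s)) (h2 : IsCircAdm R (win z n (s + k))) :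
    Rel R d n ⟨win z n s, win_adm hz n s⟩ ⟨win z n (s+k), win_adm hz n (s+k)⟩ := by
  refine ⟨h1, h2, k, hk, fun t => ⟨win z n (s + t), win_adm hz n (s+t)⟩, ?_, rfl, ?_⟩
  · simp
  · intro t ht
    intro i hi
    show z (s + (t+1) + i.val) = z (s + t + (i.val + 1))
    congr 1
    omega

theorem chain {R : A → A → Prop} {z : ℕ → A} (hz : ∀ p, R (z p) (z (p+1)))
    {n d : ℕ} (σ : ℕ → ℕ)
    (hmono : ∀ m, σ m ≤ σ (m+1)) (hgap : ∀ m, σ (m+1) ≤ σ m + d)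
    (hcirc : ∀ m, IsCircAdm R (win z n (σ m))) (M : ℕ) :
    Relation.ReflTransGen (Rel R d n)
      ⟨win z n (σ 0), win_adm hz n (σ 0)⟩ ⟨win z n (σ M), win_adm hz n (σ M)⟩ := by
  induction M with
  | zero => exact Relation.ReflTransGen.refl
  | succ M ih =>
    refine Relation.ReflTransGen.tail ih ?_
    have e : σ M + (σ (M+1) - σ M) = σ (M+1) := by have := hmono M; omega
    have h := hop hz (k := σ (M+1) - σ M) (d := d) (s := σ M)
      (by have := hgap M; omega) (hcirc M) (by rw [e]; exact hcirc (M+1))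
    rw [e] at h
    exact h

theorem circ_mod {R : A → A → Prop} {n : ℕ} {a : Fin n → A} (h : IsCircAdm R a)
    (hn : 0 < n) (q : ℕ) :
    R (a ⟨q % n, Nat.mod_lt _ hn⟩) (a ⟨(q+1) % n, Nat.mod_lt _ hn⟩) := by
  have h2 := h ⟨q % n, Nat.mod_lt _ hn⟩
  have e : (⟨(q % n + 1) % n, Nat.mod_lt _ hn⟩ : Fin n)
      = (⟨(q+1) % n, Nat.mod_lt _ hn⟩ : Fin n) :=
    Fin.ext (Nat.ModEq.add_right 1 (Nat.mod_modEq q n))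
  rwa [e] at h2

def pw {κ : ℕ} (u : A → A → Fin κ → A) (α β : A) (t : ℕ) : A :=
  if h : t < κ + 2 then (Fin.cons α (Fin.snoc (u α β) β) : Fin (κ+2) → A) ⟨t, h⟩ else β

theorem pw_zero {κ : ℕ} (u : A → A → Fin κ → A) (α β : A) : pw u α β 0 = α := by
  unfold pw
  rw [dif_pos (show 0 < κ + 2 by omega)]
  rfl

theorem pw_last {κ : ℕ} (u : A → A → Fin κ → A) (α β : A) : pw u α β (κ + 1) = β := by
  have h : κ + 1 < κ + 2 := by omega
  unfold pw
  rw [dif_pos h]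
  have e : (⟨κ+1, h⟩ : Fin (κ+2)) = Fin.succ (Fin.last κ) := rfl
  rw [e, Fin.cons_succ, Fin.snoc_last]

theorem pw_step {R : A → A → Prop} {κ : ℕ} {u : A → A → Fin κ → A}
    (hu : ∀ α β, IsAdm R (Fin.cons α (Fin.snoc (u α β) β)))
    (α β : A) {t : ℕ} (ht : t ≤ κ) :
    R (pw u α β t) (pw u α β (t+1)) := by
  have h1 : t < κ + 2 := by omega
  have h2 : t + 1 < κ + 2 := by omega
  unfold pw
  rw [dif_pos h1, dif_pos h2]
  exact hu α β ⟨t, h1⟩ h2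

/-! ### segment machinery -/

def seg {κ : ℕ} (u : A → A → Fin κ → A) (v : ℕ → A) (M0 : ℕ) (p : ℕ) : A :=
  pw u (v ((p - M0)/(κ+1))) (v ((p - M0)/(κ+1) + 1)) ((p - M0) % (κ+1))

theorem seg_node {κ : ℕ} (u : A → A → Fin κ → A) (v : ℕ → A) (M0 : ℕ) (j : ℕ) :
    seg u v M0 (M0 + (κ+1)*j) = v j := by
  unfold seg
  rw [Nat.add_sub_cancel_left, Nat.mul_div_cancel_left j (Nat.succ_pos κ),
    Nat.mul_mod_right, pw_zero]

theorem seg_adj {R : A → A → Prop} {κ : ℕ} {u : A → A → Fin κ → A}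
    (hu : ∀ α β, IsAdm R (Fin.cons α (Fin.snoc (u α β) β)))
    (v : ℕ → A) (M0 : ℕ) {p : ℕ} (hp : M0 ≤ p) :
    R (seg u v M0 p) (seg u v M0 (p+1)) := by
  obtain ⟨m, hm⟩ : ∃ m, p - M0 = m := ⟨_, rfl⟩
  obtain ⟨j, hj⟩ : ∃ j, m / (κ+1) = j := ⟨_, rfl⟩
  obtain ⟨t, ht'⟩ : ∃ t, m % (κ+1) = t := ⟨_, rfl⟩
  have hdm0 := Nat.div_add_mod m (κ+1)
  rw [hj, ht'] at hdm0
  obtain ⟨P, hP⟩ : ∃ P, (κ+1)*j = P := ⟨_, rfl⟩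
  rw [hP] at hdm0
  have ht : t < κ+1 := by rw [← ht']; exact Nat.mod_lt _ (Nat.succ_pos κ)
  have hp1 : p + 1 - M0 = m + 1 := by omega
  unfold seg
  rw [hm, hj, ht', hp1]
  rcases Nat.lt_or_ge t κ with hlt | hge
  · have e : m + 1 = (κ+1)*j + (t+1) := by rw [hP]; omega
    have hq1 : (m+1)/(κ+1) = j := by
      rw [e, Nat.mul_add_div (Nat.succ_pos κ), Nat.div_eq_of_lt (by omega)]
      omega
    have hq2 : (m+1) % (κ+1) = t+1 := by
      rw [e, Nat.mul_add_mod, Nat.mod_eq_of_lt (by omega)]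
    rw [hq1, hq2]
    exact pw_step hu _ _ (by omega)
  · have htk : t = κ := by omega
    have e : m + 1 = (κ+1)*(j+1) := by rw [Nat.mul_succ, hP]; omega
    have hq1 : (m+1)/(κ+1) = j+1 := by rw [e, Nat.mul_div_cancel_left _ (Nat.succ_pos κ)]
    have hq2 : (m+1) % (κ+1) = 0 := by rw [e, Nat.mul_mod_right]
    rw [hq1, hq2, pw_zero, htk]
    have goal' := pw_step hu (v j) (v (j+1)) (le_refl κ)
    rw [pw_last] at goal'
    exact goal' 

/-! ### small case -/

def smallZ {κ : ℕ} (u : A → A → Fin κ → A) {n : ℕ} (hn : 0 < n) (a b : Fin n → A) :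
    ℕ → A := fun p =>
  if h : p < n then a ⟨p, h⟩
  else if p < n + κ then pw u (a ⟨n-1, Nat.sub_lt hn one_pos⟩) (b ⟨0, hn⟩) (p - (n-1))
  else b ⟨(p - (n+κ)) % n, Nat.mod_lt _ hn⟩

theorem smallZ_mid {κ : ℕ} (u : A → A → Fin κ → A) {n : ℕ} (hn : 0 < n)
    (a b : Fin n → A) {t : ℕ} (ht : t ≤ κ + 1) :
    smallZ u hn a b (n - 1 + t) = pw u (a ⟨n-1, Nat.sub_lt hn one_pos⟩) (b ⟨0, hn⟩) t := by
  unfold smallZ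
  rcases Nat.lt_or_ge (n-1+t) n with h | h
  · rw [dif_pos h]
    have ht0 : t = 0 := by omega
    subst ht0
    rw [pw_zero]
    exact congrArg a (Fin.ext (by simp))
  · rw [dif_neg (by omega)]
    rcases Nat.lt_or_ge (n-1+t) (n+κ) with h2 | h2
    · rw [if_pos h2]
      congr 1
      omega
    · have ht2 : t = κ + 1 := by omega
      subst ht2
      rw [if_neg (by omega), pw_last]
      refine congrArg b (Fin.ext ?_)
      show (n - 1 + (κ+1) - (n+κ)) % n = 0
      have e : n - 1 + (κ+1) - (n+κ) = 0 := by omega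
      rw [e]
      exact Nat.zero_mod n

theorem smallZ_adj {R : A → A → Prop} {κ : ℕ} {u : A → A → Fin κ → A}
    (hu : ∀ α β, IsAdm R (Fin.cons α (Fin.snoc (u α β) β)))
    {n : ℕ} (hn : 0 < n) (a b : Fin n → A)
    (ha : IsCircAdm R a) (hb : IsCircAdm R b) :
    ∀ p, R (smallZ u hn a b p) (smallZ u hn a b (p+1)) := by
  intro p
  rcases Nat.lt_or_ge (p+1) n with h | h
  · have hp : p < n := by omega
    show R (smallZ u hn a b p) (smallZ u hn a b (p+1))
    unfold smallZ
    rw [dif_pos hp, dif_pos h]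
    exact circ_adm ha ⟨p, hp⟩ h
  · rcases Nat.lt_or_ge p (n + κ) with h2 | h2
    · have hp1 : n - 1 ≤ p := by omega
      have e1 : p = n - 1 + (p - (n-1)) := by omega
      have e2 : p + 1 = n - 1 + ((p - (n-1)) + 1) := by omega
      have ht : p - (n-1) ≤ κ := by omega
      rw [e1, Nat.add_assoc, smallZ_mid u hn a b (by omega), smallZ_mid u hn a b (by omega)]
      exact pw_step hu _ _ ht
    · unfold smallZ
      rw [dif_neg (by omega), if_neg (by omega), dif_neg (by omega), if_neg (by omega)]
      have h3 := circ_mod hb hn (p - (n+κ))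
      have e : p + 1 - (n+κ) = (p - (n+κ)) + 1 := by omega
      have e2 : (⟨(p + 1 - (n+κ)) % n, Nat.mod_lt _ hn⟩ : Fin n)
          = ⟨((p - (n+κ)) + 1) % n, Nat.mod_lt _ hn⟩ := by
        refine Fin.ext ?_
        show (p + 1 - (n+κ)) % n = ((p - (n+κ)) + 1) % n
        rw [e]
      rw [e2]
      exact h3

theorem smallZ_win0 {κ : ℕ} (u : A → A → Fin κ → A) {n : ℕ} (hn : 0 < n)
    (a b : Fin n → A) : win (smallZ u hn a b) n 0 = a := by
  funext i
  show smallZ u hn a b (0 + i.val) = a i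
  unfold smallZ
  rw [dif_pos (show 0 + i.val < n by have := i.isLt; omega)]
  exact congrArg a (Fin.ext (by simp))

theorem smallZ_winEnd {κ : ℕ} (u : A → A → Fin κ → A) {n : ℕ} (hn : 0 < n)
    (a b : Fin n → A) : win (smallZ u hn a b) n (n + κ) = b := by
  funext i
  show smallZ u hn a b (n + κ + i.val) = b i
  unfold smallZ
  rw [dif_neg (by omega), if_neg (by omega)]
  refine congrArg b (Fin.ext ?_)
  show (n + κ + i.val - (n+κ)) % n = i.val
  have e : n + κ + i.val - (n+κ) = i.val := by omega
  rw [e]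
  exact Nat.mod_eq_of_lt i.isLt


/-! ### the grid word -/

def gv {n : ℕ} (hn : 0 < n) (a b : Fin n → A) (κ M0 Q : ℕ) : ℕ → A := fun j =>
  if j % 2 = 0 then a ⟨(M0 + (κ+1)*j) % n, Nat.mod_lt _ hn⟩
  else b ⟨(M0 + (κ+1)*j + (κ+1) - Q) % n, Nat.mod_lt _ hn⟩

def gridZ {κ n : ℕ} (u : A → A → Fin κ → A) (hn : 0 < n) (a b : Fin n → A)
    (M0 B Q : ℕ) : ℕ → A := fun p =>
  if p ≤ M0 then a ⟨p % n, Nat.mod_lt _ hn⟩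
  else if p < B then seg u (gv hn a b κ M0 Q) M0 p
  else b ⟨(p - B) % n, Nat.mod_lt _ hn⟩

theorem gridZ_ext {κ n : ℕ} (u : A → A → Fin κ → A) (hn : 0 < n) (a b : Fin n → A)
    {M0 B Q I : ℕ} (hBI : B = M0 + (κ+1)*I) (hIodd : I % 2 = 1)
    (hBQ : B + (κ+1) = Q + n) (hQB : Q ≤ B)
    {p : ℕ} (h1 : M0 ≤ p) (h2 : p ≤ B) :
    gridZ u hn a b M0 B Q p = seg u (gv hn a b κ M0 Q) M0 p := by
  unfold gridZ
  rcases eq_or_lt_of_le h1 with he | hgt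
  · subst he
    rw [if_pos le_rfl]
    have hs := seg_node u (gv hn a b κ M0 Q) M0 0
    rw [Nat.mul_zero, Nat.add_zero] at hs
    rw [hs]
    unfold gv
    rw [if_pos (by norm_num)]
    refine congrArg a (Fin.ext ?_)
    show M0 % n = (M0 + (κ+1)*0) % n
    rw [Nat.mul_zero, Nat.add_zero]
  · rcases lt_or_eq_of_le h2 with hlt | heB
    · rw [if_neg (by omega), if_pos hlt]
    · subst heB
      rw [if_neg (by omega), if_neg (lt_irrefl _), hBI, seg_node]
      unfold gv
      rw [if_neg (by omega)]
      refine congrArg b (Fin.ext ?_)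
      show (M0 + (κ+1)*I - (M0 + (κ+1)*I)) % n = (M0 + (κ+1)*I + (κ+1) - Q) % n
      have e1 : M0 + (κ+1)*I + (κ+1) - Q = n := by rw [← hBI]; omega
      rw [e1, Nat.sub_self, Nat.zero_mod, Nat.mod_self]

theorem gridZ_node {κ n : ℕ} (u : A → A → Fin κ → A) (hn : 0 < n) (a b : Fin n → A)
    {M0 B Q I : ℕ} (hBI : B = M0 + (κ+1)*I) (hIodd : I % 2 = 1)
    (hBQ : B + (κ+1) = Q + n) (hQB : Q ≤ B)
    {j : ℕ} (hj : M0 + (κ+1)*j ≤ B) :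
    gridZ u hn a b M0 B Q (M0 + (κ+1)*j) = gv hn a b κ M0 Q j := by
  rw [gridZ_ext u hn a b hBI hIodd hBQ hQB (Nat.le_add_right _ _) hj, seg_node]

theorem gridZ_adj {R : A → A → Prop} {κ n : ℕ} {u : A → A → Fin κ → A}
    (hu : ∀ α β, IsAdm R (Fin.cons α (Fin.snoc (u α β) β)))
    (hn : 0 < n) {a b : Fin n → A} (ha : IsCircAdm R a) (hb : IsCircAdm R b)
    {M0 B Q I : ℕ} (hBI : B = M0 + (κ+1)*I) (hIodd : I % 2 = 1)
    (hBQ : B + (κ+1) = Q + n) (hQB : Q ≤ B) (hMB : M0 < B) :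
    ∀ p, R (gridZ u hn a b M0 B Q p) (gridZ u hn a b M0 B Q (p+1)) := by
  intro p
  rcases Nat.lt_or_ge p M0 with h1 | h1
  · show R (gridZ u hn a b M0 B Q p) (gridZ u hn a b M0 B Q (p+1))
    unfold gridZ
    rw [if_pos (by omega), if_pos (by omega)]
    exact circ_mod ha hn p
  · rcases Nat.lt_or_ge p B with h2 | h2
    · rw [gridZ_ext u hn a b hBI hIodd hBQ hQB h1 (by omega),
        gridZ_ext u hn a b hBI hIodd hBQ hQB (by omega) (by omega)]
      exact seg_adj hu _ _ h1
    · show R (gridZ u hn a b M0 B Q p) (gridZ u hn a b M0 B Q (p+1))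
      unfold gridZ
      rw [if_neg (by omega), if_neg (by omega), if_neg (by omega), if_neg (by omega)]
      have h3 := circ_mod hb hn (p - B)
      have e2 : (⟨(p + 1 - B) % n, Nat.mod_lt _ hn⟩ : Fin n)
          = ⟨((p - B) + 1) % n, Nat.mod_lt _ hn⟩ := by
        refine Fin.ext ?_
        show (p + 1 - B) % n = ((p - B) + 1) % n
        congr 1
        omega
      rw [e2]
      exact h3


theorem gridZ_win0 {κ n : ℕ} (u : A → A → Fin κ → A) (hn : 0 < n) (a b : Fin n → A)
    {M0 B Q : ℕ} (hnM : n ≤ M0) :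
    win (gridZ u hn a b M0 B Q) n 0 = a := by
  funext i
  show gridZ u hn a b M0 B Q (0 + i.val) = a i
  unfold gridZ
  rw [if_pos (by have := i.isLt; omega)]
  refine congrArg a (Fin.ext ?_)
  show (0 + i.val) % n = i.val
  rw [Nat.zero_add]
  exact Nat.mod_eq_of_lt i.isLt

theorem gridZ_winB {κ n : ℕ} (u : A → A → Fin κ → A) (hn : 0 < n) (a b : Fin n → A)
    {M0 B Q : ℕ} (hMB : M0 < B) :
    win (gridZ u hn a b M0 B Q) n B = b := by
  funext i
  show gridZ u hn a b M0 B Q (B + i.val) = b i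
  unfold gridZ
  rw [if_neg (by omega), if_neg (by omega)]
  refine congrArg b (Fin.ext ?_)
  show (B + i.val - B) % n = i.val
  rw [Nat.add_sub_cancel_left]
  exact Nat.mod_eq_of_lt i.isLt

theorem gridCase {R : A → A → Prop} {κ : ℕ} {u : A → A → Fin κ → A}
    (hu : ∀ α β, IsAdm R (Fin.cons α (Fin.snoc (u α β) β)))
    {n : ℕ} (hn4 : 4*(κ+1) < n) {a b : Fin n → A}
    (ha : IsCircAdm R a) (hb : IsCircAdm R b) :
    ∃ (z : ℕ → A) (σ : ℕ → ℕ),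
      (∀ p, R (z p) (z (p+1))) ∧
      (∀ m, σ m ≤ σ (m+1)) ∧ (∀ m, σ (m+1) ≤ σ m + 5*(κ+1)) ∧
      (∀ m, IsCircAdm R (win z n (σ m))) ∧
      σ 0 = 0 ∧ win z n 0 = a ∧ win z n (σ (2*n)) = b := by
  have hn : 0 < n := by omega
  -- choose the offset r and the count c
  obtain ⟨r, c, hr1, hr2, hc2, hceq⟩ :
      ∃ r c, 0 < r ∧ r ≤ 2*(κ+1) ∧ 2 ≤ c ∧ 2*(κ+1)*c + r = n := by
    obtain ⟨rm, hrm⟩ : ∃ rm, n % (2*(κ+1)) = rm := ⟨_, rfl⟩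
    obtain ⟨nq, hnq⟩ : ∃ nq, n / (2*(κ+1)) = nq := ⟨_, rfl⟩
    have hdm0 := Nat.div_add_mod n (2*(κ+1))
    rw [hrm, hnq] at hdm0
    have hrmlt : rm < 2*(κ+1) := by rw [← hrm]; exact Nat.mod_lt _ (by omega)
    obtain ⟨D, hD⟩ : ∃ D, 2*(κ+1)*nq = D := ⟨_, rfl⟩
    rw [hD] at hdm0
    rcases Nat.eq_zero_or_pos rm with h0 | hpos
    · have h3 : 2 < nq := by
        have e0 : 2*(κ+1)*2 = 4*(κ+1) := by ring
        have e1 : 2*(κ+1)*2 < 2*(κ+1)*nq := by rw [hD, e0]; omega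
        exact Nat.lt_of_mul_lt_mul_left e1
      refine ⟨2*(κ+1), nq - 1, by omega, le_rfl, by omega, ?_⟩
      have e2 : 2*(κ+1)*(nq-1) + 2*(κ+1) = 2*(κ+1)*nq := by
        rw [← Nat.mul_succ]; congr 1; omega
      obtain ⟨E, hE⟩ : ∃ E, 2*(κ+1)*(nq-1) = E := ⟨_, rfl⟩
      rw [hE] at e2 ⊢
      rw [hD] at e2
      omega
    · refine ⟨rm, nq, hpos, by omega, ?_, by omega⟩
      have e0 : 2*(κ+1)*1 = 2*(κ+1) := by ring
      have e1 : 2*(κ+1)*1 < 2*(κ+1)*nq := by rw [hD, e0]; omega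
      have := Nat.lt_of_mul_lt_mul_left e1
      omega
  obtain ⟨H, hH⟩ : ∃ H, 2*(κ+1)*c = H := ⟨_, rfl⟩
  rw [hH] at hceq
  obtain ⟨Q, hQ⟩ : ∃ Q, 2*(κ+1)*n = Q := ⟨_, rfl⟩
  have hQn : n ≤ Q := by rw [← hQ]; exact Nat.le_mul_of_pos_left n (by omega)
  obtain ⟨G, hG⟩ : ∃ G, (κ+1)*(2*c-1) = G := ⟨_, rfl⟩
  have hG3 : 3*(κ+1) ≤ G := by
    have h3' := Nat.mul_le_mul_left (κ+1) (show 3 ≤ 2*c-1 by omega)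
    rw [hG] at h3'
    have e : (κ+1)*3 = 3*(κ+1) := by ring
    omega
  have hBQ : (Q + r + G) + (κ+1) = Q + n := by
    have e1 : (κ+1)*(2*c-1) + (κ+1) = (κ+1)*(2*c) := by
      rw [← Nat.mul_succ]; congr 1; omega
    have e2 : (κ+1)*(2*c) = 2*(κ+1)*c := by ring
    rw [hG, e2, hH] at e1
    omega
  have hBI : Q + r + G = (Q + r) + (κ+1)*(2*c-1) := by rw [hG]
  have hIodd : (2*c-1) % 2 = 1 := by omega
  have hQB : Q ≤ Q + r + G := by omega
  have hMB : Q + r < Q + r + G := by omega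
  have hz := gridZ_adj hu hn ha hb hBI hIodd hBQ hQB hMB
  -- the two key equalities
  have αeq : ∀ m, m < n →
      gridZ u hn a b (Q+r) (Q+r+G) Q (2*(κ+1)*m + n)
        = gridZ u hn a b (Q+r) (Q+r+G) Q (2*(κ+1)*m) := by
    intro m hm
    obtain ⟨s, hs⟩ : ∃ s, 2*(κ+1)*m = s := ⟨_, rfl⟩
    have hs2 : s + 2*(κ+1) ≤ Q := by
      have e1 : 2*(κ+1)*(m+1) ≤ 2*(κ+1)*n := Nat.mul_le_mul_left _ (by omega)
      have e2 : 2*(κ+1)*(m+1) = 2*(κ+1)*m + 2*(κ+1) := Nat.mul_succ _ _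
      rw [e2, hs, hQ] at e1
      exact e1
    rw [hs]
    rcases Nat.lt_or_ge (m + c) n with hmc | hmc
    · have hsn : s + n ≤ Q + r := by
        have e1 : 2*(κ+1)*(m+c) ≤ 2*(κ+1)*n := Nat.mul_le_mul_left _ (by omega)
        have e2 : 2*(κ+1)*(m+c) = 2*(κ+1)*m + H := by rw [← hH]; ring
        rw [e2, hs, hQ] at e1
        omega
      show gridZ u hn a b (Q+r) (Q+r+G) Q (s+n) = gridZ u hn a b (Q+r) (Q+r+G) Q s
      unfold gridZ
      rw [if_pos hsn, if_pos (by omega)]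
      exact congrArg a (Fin.ext (Nat.add_mod_right s n))
    · obtain ⟨i, hi⟩ : ∃ i, m + c = n + i := ⟨m + c - n, by omega⟩
      obtain ⟨J, hJ⟩ : ∃ J, 2*(κ+1)*i = J := ⟨_, rfl⟩
      have hsn : s + n = (Q + r) + (κ+1)*(2*i) := by
        have e1 : 2*(κ+1)*(m+c) = 2*(κ+1)*(n+i) := by rw [hi]
        have e2 : 2*(κ+1)*(m+c) = 2*(κ+1)*m + H := by rw [← hH]; ring
        have e3 : 2*(κ+1)*(n+i) = 2*(κ+1)*n + J := by rw [← hJ]; ring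
        have e4 : (κ+1)*(2*i) = J := by rw [← hJ]; ring
        rw [e2, e3, hs, hQ] at e1
        rw [e4]
        omega
      have hjB : (Q + r) + (κ+1)*(2*i) ≤ Q + r + G := by
        rw [← hsn]; omega
      rw [hsn, gridZ_node u hn a b hBI hIodd hBQ hQB hjB]
      unfold gv
      rw [if_pos (by omega : (2*i) % 2 = 0)]
      show a ⟨((Q+r) + (κ+1)*(2*i)) % n, Nat.mod_lt _ hn⟩
          = gridZ u hn a b (Q+r) (Q+r+G) Q s
      unfold gridZ
      rw [if_pos (show s ≤ Q+r by omega)]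
      refine congrArg a (Fin.ext ?_)
      show ((Q+r) + (κ+1)*(2*i)) % n = s % n
      rw [← hsn]
      exact Nat.add_mod_right s n
  have βeq : ∀ i, (Q+r) + (κ+1)*(2*i+1) < Q+r+G →
      gridZ u hn a b (Q+r) (Q+r+G) Q ((Q+r) + (κ+1)*(2*i+1) + n)
        = gridZ u hn a b (Q+r) (Q+r+G) Q ((Q+r) + (κ+1)*(2*i+1)) := by
    intro i hiB
    rw [gridZ_node u hn a b hBI hIodd hBQ hQB (le_of_lt hiB)]
    obtain ⟨K, hK⟩ : ∃ K, (κ+1)*(2*i+1) = K := ⟨_, rfl⟩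
    have hK1 : κ+1 ≤ K := by
      have h1' := Nat.mul_le_mul_left (κ+1) (show 1 ≤ 2*i+1 by omega)
      rw [hK] at h1'
      have e : (κ+1)*1 = κ+1 := by ring
      omega
    unfold gridZ
    rw [hK]
    rw [if_neg (by omega), if_neg (by omega)]
    unfold gv
    rw [if_neg (by omega : ¬ (2*i+1) % 2 = 0)]
    refine congrArg b (Fin.ext ?_)
    show (Q + r + K + n - (Q+r+G)) % n = ((Q+r) + (κ+1)*(2*i+1) + (κ+1) - Q) % n
    rw [hK]
    congr 1
    omega
  refine ⟨gridZ u hn a b (Q+r) (Q+r+G) Q,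
    fun m => if m < n then 2*(κ+1)*m
      else min ((Q+r) + (κ+1) + 2*(κ+1)*(m - n)) (Q+r+G),
    hz, ?_, ?_, ?_, ?_, ?_, ?_⟩
  · -- monotone
    intro m
    by_cases hm1 : m + 1 < n
    · have hm : m < n := by omega
      simp only [if_pos hm, if_pos hm1]
      exact Nat.mul_le_mul_left _ (by omega)
    · by_cases hm : m < n
      · simp only [if_pos hm, if_neg hm1]
        have hmn : m + 1 = n := by omega
        have e1 : 2*(κ+1)*(m+1) = Q := by rw [hmn, hQ]
        have e2 : 2*(κ+1)*(m+1) = 2*(κ+1)*m + 2*(κ+1) := Nat.mul_succ _ _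
        have e3 : m + 1 - n = 0 := by omega
        rw [e3, Nat.mul_zero]
        obtain ⟨s, hs⟩ : ∃ s, 2*(κ+1)*m = s := ⟨_, rfl⟩
        rw [hs] at e2
        rw [e2] at e1
        rw [hs]
        omega
      · simp only [if_neg hm, if_neg hm1]
        have e3 : m + 1 - n = (m - n) + 1 := by omega
        have e4 : 2*(κ+1)*((m-n)+1) = 2*(κ+1)*(m-n) + 2*(κ+1) := Nat.mul_succ _ _
        obtain ⟨X, hX⟩ : ∃ X, 2*(κ+1)*(m-n) = X := ⟨_, rfl⟩
        rw [e3, e4, hX]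
        omega
  · -- gaps
    intro m
    by_cases hm1 : m + 1 < n
    · have hm : m < n := by omega
      simp only [if_pos hm, if_pos hm1]
      have e2 : 2*(κ+1)*(m+1) = 2*(κ+1)*m + 2*(κ+1) := Nat.mul_succ _ _
      obtain ⟨s, hs⟩ : ∃ s, 2*(κ+1)*m = s := ⟨_, rfl⟩
      rw [hs] at e2 ⊢
      omega
    · by_cases hm : m < n
      · simp only [if_pos hm, if_neg hm1]
        have hmn : m + 1 = n := by omega
        have e1 : 2*(κ+1)*(m+1) = Q := by rw [hmn, hQ]
        have e2 : 2*(κ+1)*(m+1) = 2*(κ+1)*m + 2*(κ+1) := Nat.mul_succ _ _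
        have e3 : m + 1 - n = 0 := by omega
        rw [e3, Nat.mul_zero]
        obtain ⟨s, hs⟩ : ∃ s, 2*(κ+1)*m = s := ⟨_, rfl⟩
        rw [hs] at e2
        rw [e2] at e1
        rw [hs]
        omega
      · simp only [if_neg hm, if_neg hm1]
        have e3 : m + 1 - n = (m - n) + 1 := by omega
        have e4 : 2*(κ+1)*((m-n)+1) = 2*(κ+1)*(m-n) + 2*(κ+1) := Nat.mul_succ _ _
        obtain ⟨X, hX⟩ : ∃ X, 2*(κ+1)*(m-n) = X := ⟨_, rfl⟩
        rw [e3, e4, hX]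
        omega
  · -- circularity at the stops
    intro m
    by_cases hm : m < n
    · simp only [if_pos hm]
      exact win_circ_of_eq hz (αeq m hm)
    · simp only [if_neg hm]
      rcases le_or_gt (Q+r+G) ((Q+r) + (κ+1) + 2*(κ+1)*(m - n)) with hle | hlt
      · rw [min_eq_right hle]
        have hwb := gridZ_winB u hn a b (M0 := Q+r) (B := Q+r+G) (Q := Q) hMB
        rw [hwb]
        exact hb
      · rw [min_eq_left (le_of_lt hlt)]
        have e : (Q+r) + (κ+1) + 2*(κ+1)*(m-n) = (Q+r) + (κ+1)*(2*(m-n)+1) := by ring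
        rw [e]
        rw [e] at hlt
        exact win_circ_of_eq hz (βeq (m-n) hlt)
  · -- σ 0 = 0
    simp only [if_pos hn, Nat.mul_zero]
  · -- window at 0
    exact gridZ_win0 u hn a b (by omega)
  · -- final window
    have h2n : ¬ (2*n < n) := by omega
    simp only [if_neg h2n]
    have e3 : 2*n - n = n := by omega
    rw [e3, hQ]
    rw [min_eq_right (by omega)]
    exact gridZ_winB u hn a b hMB

end CWaux

theorem circ_words_step_d_strongly_connected
    {A : Type*} [Finite A] (R : A → A → Prop)
    (hprim : ∃ κ : ℕ, 1 ≤ κ ∧ ∀ α β : A, ∃ u : Fin κ → A,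
      IsAdm R (Fin.cons α (Fin.snoc u β))) :
    ∃ d : ℕ, 0 < d ∧ ∀ n : ℕ, 1 ≤ n →
      ∀ a b : {w : Fin n → A // IsAdm R w}, IsCircAdm R a.val → IsCircAdm R b.val →
        Relation.ReflTransGen
          (fun u v : {w : Fin n → A // IsAdm R w} =>
            IsCircAdm R u.val ∧ IsCircAdm R v.val ∧
              PathLe (fun p q => deBruijnTrans p.val q.val) d u v)
          a b := by
  classical
  obtain ⟨κ, hκ1, hword⟩ := hprim
  choose u hu using hword
  refine ⟨5*(κ+1), by omega, ?_⟩
  intro n hn a b ha hb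
  have hn0 : 0 < n := hn
  rcases Nat.lt_or_ge (4*(κ+1)) n with hbig | hsmall
  · obtain ⟨z, σ, hz, hmono, hgap, hcirc, hσ0, hw0, hwend⟩ :=
      CWaux.gridCase hu hbig ha hb
    have hch := CWaux.chain hz σ hmono hgap hcirc (2*n)
    have ea : (⟨CWaux.win z n (σ 0), CWaux.win_adm hz n (σ 0)⟩ :
        {w : Fin n → A // IsAdm R w}) = a := Subtype.ext (by rw [hσ0]; exact hw0)
    have eb : (⟨CWaux.win z n (σ (2*n)), CWaux.win_adm hz n (σ (2*n))⟩ :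
        {w : Fin n → A // IsAdm R w}) = b := Subtype.ext hwend
    rw [ea, eb] at hch
    exact hch
  · have hzadj := CWaux.smallZ_adj hu hn0 a.val b.val ha hb
    have h1 : IsCircAdm R (CWaux.win (CWaux.smallZ u hn0 a.val b.val) n 0) := by
      rw [CWaux.smallZ_win0]; exact ha
    have h2 : IsCircAdm R
        (CWaux.win (CWaux.smallZ u hn0 a.val b.val) n (0 + (n + κ))) := by
      rw [Nat.zero_add, CWaux.smallZ_winEnd]; exact hb
    have h := CWaux.hop hzadj (s := 0) (k := n + κ) (d := 5*(κ+1)) (by omega) h1 h2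
    have ea : (⟨CWaux.win (CWaux.smallZ u hn0 a.val b.val) n 0,
        CWaux.win_adm hzadj n 0⟩ : {w : Fin n → A // IsAdm R w}) = a :=
      Subtype.ext (CWaux.smallZ_win0 u hn0 a.val b.val)
    have eb : (⟨CWaux.win (CWaux.smallZ u hn0 a.val b.val) n (0 + (n + κ)),
        CWaux.win_adm hzadj n (0 + (n + κ))⟩ : {w : Fin n → A // IsAdm R w}) = b :=
      Subtype.ext (by rw [Nat.zero_add]; exact CWaux.smallZ_winEnd u hn0 a.val b.val)
    rw [ea, eb] at h
    exact Relation.ReflTransGen.single h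
end

section
/- Let n ≥ 1, let B be a group, let K ⊆ B, and let G = ℤ_n ≀ B be the circular lamplighter group. Then the map g = (a, Φ) ↦ (a, Ψ(g)), where Ψ(a, Φ)(ι) = Φ(a + ι), is a bijection from G onto ℤ_n × fun(ℤ_n, B) which is an isomorphism from the Cayley digraph of G with respect to K̃₊ = {(1, δ₁ᵇ) : b ∈ K} onto the tensor product of the directed cycle C⃗_n with the Cayley circular slider digraph S_K of span n over B; that is, for g, g′ ∈ G with g = (a, Φ) and g′ = (a′, Φ′), there exists b ∈ K with g′ = g·(1, δ₁ᵇ) if and only if a′ = a + 1 and Ψ(g) ↝ Ψ(g′) is an arrow of S_K. -/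
/-! Right multiplication by `(1, δ₁ᵇ)` moves the lamplighter one step to the right and multiplies
the lamp at its new position by `b`. Read from the lamplighter's position, `Ψ(g·(1, δ₁ᵇ))` is
therefore `Ψ(g)` shifted by one, except at `0`, where it is `Ψ(g)(1)·b`: an arrow of `S_K`. Since
`(a, Φ) ↦ (a, Ψ)` is invertible, `g′ = g·(1, δ₁ᵇ)` is equivalent to that arrow together with
`a′ = a + 1`. -/

/-- The group of `B`-valued configurations on `ℤ/nℤ` (pointwise multiplication). -/
abbrev Config (n : ℕ) (B : Type*) := ZMod n → B

/-- The translation automorphism `(TᵃΦ)(x) = Φ(x − a)` of the configuration group. -/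
def transAut {n : ℕ} {B : Type*} [Group B] (a : ZMod n) :
    Config n B ≃* Config n B where
  toFun Φ := fun x => Φ (x - a)
  invFun Φ := fun x => Φ (x + a)
  left_inv Φ := funext fun x => by simp
  right_inv Φ := funext fun x => by simp
  map_mul' Φ Ψ := rfl

/-- The action of `ℤ/nℤ` on configurations by translations, as a homomorphism
into the automorphism group. -/
def transHom (n : ℕ) (B : Type*) [Group B] :
    Multiplicative (ZMod n) →* MulAut (Config n B) where
  toFun a := transAut (Multiplicative.toAdd a)
  map_one' := by
    ext Φ x
    simp [transAut]
  map_mul' a b := by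
    ext Φ x
    simp [transAut, sub_sub]

/-- The circular lamplighter group `ℤ_n ≀ B`: the semidirect product of `ℤ/nℤ` acting on
the group of `B`-valued configurations on `ℤ/nℤ` by translations.  An element `g` is a
pair: the lamp configuration `g.left` and the lamplighter position `g.right`, with
multiplication `(Φ₁, a₁)·(Φ₂, a₂) = (Φ₁ · T^{a₁}Φ₂, a₁ + a₂)`. -/
abbrev Lamp (n : ℕ) (B : Type*) [Group B] :=
  Config n B ⋊[transHom n B] Multiplicative (ZMod n)

/-- The configuration `δ₁ᵇ`: equal to `b` at `1 ∈ ℤ/nℤ` and to the identity elsewhere. -/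
def deltaOne {n : ℕ} {B : Type*} [Group B] (b : B) : Config n B :=
  fun x => if x = (1 : ZMod n) then b else 1

/-- The walk-right—switch element `(1, δ₁ᵇ)` of the circular lamplighter group. -/
def gen {n : ℕ} {B : Type*} [Group B] (b : B) : Lamp n B :=
  ⟨deltaOne b, Multiplicative.ofAdd (1 : ZMod n)⟩

/-- `Ψ(a, Φ)(ι) = Φ(a + ι)`: the configuration read off in lamplighter's coordinates. -/
def Psi {n : ℕ} {B : Type*} [Group B] (g : Lamp n B) : Config n B :=
  fun ι => g.left (Multiplicative.toAdd g.right + ι)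

open Function

namespace Lamp

variable {n : ℕ} {B : Type*} [Group B]

def psiEquiv : Lamp n B ≃ ZMod n × Config n B where
  toFun g := (Multiplicative.toAdd g.right, Psi g)
  invFun p := ⟨fun x => p.2 (x - p.1), Multiplicative.ofAdd p.1⟩
  left_inv g := by ext <;> simp [Psi]
  right_inv p := by ext <;> simp [Psi]

/-- The arrows of `S_K` out of `w` are `w ↝ slide w b` for `b ∈ K`. -/
def slide (w : Config n B) (b : B) : Config n B :=
  update (fun ι => w (ι + 1)) 0 (w 1 * b)

theorem toAdd_right_mul_gen (g : Lamp n B) (b : B) :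
    Multiplicative.toAdd (g * gen b).right = Multiplicative.toAdd g.right + 1 := by
  simp [gen]

theorem psi_mul_gen_apply (g : Lamp n B) (b : B) (ι : ZMod n) :
    Psi (g * gen b) ι = Psi g (ι + 1) * deltaOne b (ι + 1) := by
  show g.left (Multiplicative.toAdd g.right + 1 + ι) *
      deltaOne b (Multiplicative.toAdd g.right + 1 + ι - Multiplicative.toAdd g.right) =
    g.left (Multiplicative.toAdd g.right + (ι + 1)) * deltaOne b (ι + 1)
  rw [add_assoc, add_sub_cancel_left, add_comm 1 ι]

theorem psi_mul_gen (g : Lamp n B) (b : B) : Psi (g * gen b) = slide (Psi g) b := by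
  ext ι
  rw [psi_mul_gen_apply]
  rcases eq_or_ne ι 0 with rfl | hι
  · simp [slide, deltaOne]
  · simp [slide, deltaOne, hι]

theorem eq_mul_gen_iff (g g' : Lamp n B) (b : B) :
    g' = g * gen b ↔
      Multiplicative.toAdd g'.right = Multiplicative.toAdd g.right + 1 ∧
        Psi g' = slide (Psi g) b := by
  rw [← psiEquiv.apply_eq_iff_eq]
  simp only [psiEquiv, Equiv.coe_fn_mk, Prod.mk.injEq, toAdd_right_mul_gen, psi_mul_gen]

end Lamp

theorem exists_mem_eq_update_mul_iff {α B : Type*} [DecidableEq α] [Group B] (K : Set B)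
    (f w : α → B) (i : α) (c : B) :
    (∃ b ∈ K, w = update f i (c * b)) ↔ (∀ j, j ≠ i → w j = f j) ∧ c⁻¹ * w i ∈ K := by
  constructor
  · rintro ⟨b, hb, rfl⟩
    exact ⟨fun j hj => update_of_ne hj _ _, by simpa using hb⟩
  · rintro ⟨hne, hK⟩
    refine ⟨c⁻¹ * w i, hK, funext fun j => ?_⟩
    by_cases hj : j = i
    · subst hj
      simp
    · simp [hj, hne j hj]

theorem cayley_of_lamplighter_is_spider_slider_general (n : ℕ)
    {B : Type*} [Group B] (K : Set B) :
    Function.Bijective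
      (fun g : Lamp n B => (Multiplicative.toAdd g.right, Psi g)) ∧
    ∀ g g' : Lamp n B,
      (∃ b ∈ K, g' = g * gen b) ↔
        (Multiplicative.toAdd g'.right = Multiplicative.toAdd g.right + 1 ∧
          (∀ ι : ZMod n, ι ≠ 0 → Psi g' ι = Psi g (ι + 1)) ∧
          (Psi g 1)⁻¹ * Psi g' 0 ∈ K) := by
  refine ⟨Lamp.psiEquiv.bijective, fun g g' => ?_⟩
  simp only [Lamp.eq_mul_gen_iff, Lamp.slide, ← exists_mem_eq_update_mul_iff]
  exact ⟨fun ⟨b, hb, hpos, hw⟩ => ⟨hpos, b, hb, hw⟩, fun ⟨hpos, b, hb, hw⟩ => ⟨b, hb, hpos, hw⟩⟩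

/-- the map `(a, Φ) ↦ (a, Ψ(a, Φ))` is a bijection from `G = ℤ_n ≀ B` onto
`ℤ_n × fun(ℤ_n, B)` which is an isomorphism from the Cayley digraph of `G` with respect to
`K̃₊ = {(1, δ₁ᵇ) : b ∈ K}` onto the tensor product of the directed cycle `C⃗_n` with the
Cayley circular slider digraph `S_K` of span `n` over `B`: there is `b ∈ K` with
`g′ = g·(1, δ₁ᵇ)` iff `a′ = a + 1` and `Ψ(g) ↝ Ψ(g′)` is an arrow of `S_K`. -/
theorem cayley_of_lamplighter_is_spider_slider (n : ℕ) (hn : 1 ≤ n)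
    {B : Type*} [Group B] (K : Set B) :
    Function.Bijective
      (fun g : Lamp n B => (Multiplicative.toAdd g.right, Psi g)) ∧
    ∀ g g' : Lamp n B,
      (∃ b ∈ K, g' = g * gen b) ↔
        (Multiplicative.toAdd g'.right = Multiplicative.toAdd g.right + 1 ∧
          (∀ ι : ZMod n, ι ≠ 0 → Psi g' ι = Psi g (ι + 1)) ∧
          (Psi g 1)⁻¹ * Psi g' 0 ∈ K) :=
  cayley_of_lamplighter_is_spider_slider_general n K
end

section
/- For all n, m ≥ 1, the Cayley digraph of the finite lamplighter group ℤ_n ≀ ℤ_m with respect to the set Q₊ = {(1, δ₁ᵇ) : b ∈ ℤ_m} of walk-right—switch generators is isomorphic to the tensor product of the directed cycle C⃗_n with the de Bruijn digraph of span n over the alphabet ℤ_m (circular form). -/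
/-- for `n, m ≥ 1`, the Cayley digraph of the finite lamplighter group
`ℤ_n ≀ ℤ_m` with respect to the set `Q₊ = {(1, δ₁ᵇ) : b ∈ ℤ_m}` of walk-right—switch
generators is isomorphic to the tensor product of the directed cycle `C⃗_n` with the
de Bruijn digraph of span `n` over the alphabet `ℤ_m` (circular form). -/
theorem cayley_of_finite_lamplighter_is_spiderweb (n m : ℕ) (hn : 1 ≤ n) (hm : 1 ≤ m) :
    ∃ e : Lamp n (Multiplicative (ZMod m)) ≃ ZMod n × (ZMod n → Multiplicative (ZMod m)),
      ∀ g g' : Lamp n (Multiplicative (ZMod m)),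
        (∃ b : Multiplicative (ZMod m), g' = g * gen b) ↔
          ((e g').1 = (e g).1 + 1 ∧
            ∀ ι : ZMod n, ι ≠ 0 → (e g').2 ι = (e g).2 (ι + 1)) := by
  classical
  set B := Multiplicative (ZMod m)
  refine ⟨{
    toFun := fun g => (Multiplicative.toAdd g.right, Psi g)
    invFun := fun p => ⟨fun x => p.2 (x - p.1), Multiplicative.ofAdd p.1⟩
    left_inv := fun g => by
      ext x
      · simp [Psi, add_sub_cancel]
      · simp
    right_inv := fun p => by
      ext x
      · simp
      · simp [Psi] }, ?_⟩
  have hright : ∀ (g : Lamp n B) (b : B),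
      Multiplicative.toAdd (g * gen b).right = Multiplicative.toAdd g.right + 1 := by
    intro g b
    simp [gen]
  have hpsi : ∀ (g : Lamp n B) (b : B) (ι : ZMod n),
      Psi (g * gen b) ι = Psi g (ι + 1) * deltaOne b (1 + ι) := by
    intro g b ι
    have key : Psi (g * gen b) ι =
        g.left (Multiplicative.toAdd g.right + 1 + ι) *
          deltaOne b ((Multiplicative.toAdd g.right + 1 + ι) - Multiplicative.toAdd g.right) :=
      rfl
    rw [key]
    congr 1
    · show g.left (Multiplicative.toAdd g.right + 1 + ι) =
        g.left (Multiplicative.toAdd g.right + (ι + 1))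
      congr 1; ring
    · congr 1; ring
  have hpsi_ne : ∀ (g : Lamp n B) (b : B) (ι : ZMod n), ι ≠ 0 →
      Psi (g * gen b) ι = Psi g (ι + 1) := by
    intro g b ι hι
    rw [hpsi]
    have : (1 : ZMod n) + ι ≠ 1 := by
      intro h; exact hι (by linear_combination h)
    simp [deltaOne, this]
  have hpsi0 : ∀ (g : Lamp n B) (b : B), Psi (g * gen b) 0 = Psi g 1 * b := by
    intro g b
    rw [hpsi]
    simp [deltaOne, zero_add]
  intro g g'
  simp only [Equiv.coe_fn_mk]
  constructor
  · rintro ⟨b, rfl⟩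
    exact ⟨hright g b, fun ι hι => hpsi_ne g b ι hι⟩
  · rintro ⟨h1, h2⟩
    refine ⟨(Psi g 1)⁻¹ * Psi g' 0, ?_⟩
    set b := (Psi g 1)⁻¹ * Psi g' 0 with hb
    -- show equality via the components (position, Psi)
    have hr : g'.right = (g * gen b).right := by
      have := hright g b
      have h1' : Multiplicative.toAdd g'.right = Multiplicative.toAdd (g * gen b).right := by
        rw [this]; exact h1
      exact Multiplicative.toAdd.injective h1'
    have hP : Psi g' = Psi (g * gen b) := by
      funext ι
      by_cases hι : ι = 0
      · subst hι
        rw [hpsi0]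
        rw [hb, mul_inv_cancel_left]
      · rw [hpsi_ne g b ι hι, h2 ι hι]
    -- recover left components
    have hl : g'.left = (g * gen b).left := by
      funext x
      have := congrFun hP (x - Multiplicative.toAdd g'.right)
      simpa [Psi, hr, add_sub_cancel] using this
    exact SemidirectProduct.ext hl hr
end

section
/- Let R be a topological Markov chain on an alphabet A with the property that for all ζ₁, ζ₂ ∈ A there is at most one ζ ∈ A with R(ζ₁, ζ) and R(ζ, ζ₂). Let n ≥ 3 and let a, a′ : ℤ/nℤ → A be circularly R-admissible circular words such that a′(ι) = a(ι + 1) for all ι ≠ 0 (i.e., a′ is a de Bruijn successor of a in the circular form). Then a′(0) = a(1), i.e., a′ = Sa is the circular shift of a. (Hence for such R every arrow of the n-periodic slider graph is a rotation.) -/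
/-- if the topological Markov chain `R` has the property that any two letters
admit at most one interpolating letter, `n ≥ 3`, and `a′` is a de Bruijn successor (in
circular form) of `a` with both `a` and `a′` circularly `R`-admissible, then `a′` is the
circular shift of `a`. -/
theorem deBruijn_successor_is_rotation
    {A : Type*} (R : A → A → Prop)
    (huniq : ∀ ζ₁ ζ₂ ζ ζ' : A, R ζ₁ ζ → R ζ ζ₂ → R ζ₁ ζ' → R ζ' ζ₂ → ζ = ζ')
    (n : ℕ) (hn : 3 ≤ n) (a a' : ZMod n → A)
    (ha : ∀ ι : ZMod n, R (a ι) (a (ι + 1)))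
    (ha' : ∀ ι : ZMod n, R (a' ι) (a' (ι + 1)))
    (hd : ∀ ι : ZMod n, ι ≠ 0 → a' ι = a (ι + 1)) :
    a' = fun ι => a (ι + 1) := by
  haveI : NeZero n := ⟨by omega⟩
  have h1 : (1 : ZMod n) ≠ 0 := by
    intro h
    have : ((1 : ℕ) : ZMod n) = ((0 : ℕ) : ZMod n) := by exact_mod_cast h
    have := (ZMod.natCast_eq_natCast_iff' 1 0 n).mp this
    simp [Nat.mod_eq_of_lt (by omega : 1 < n)] at this
  have hm : (-1 : ZMod n) ≠ 0 := neg_ne_zero.mpr h1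
  funext ι
  by_cases hι : ι = 0
  · subst hι
    have e1 : a' (-1) = a 0 := by simpa using hd (-1) hm
    have e2 : a' 1 = a (1 + 1) := hd 1 h1
    have r1 := ha' (-1)
    rw [neg_add_cancel, e1] at r1
    have r2 := ha' 0
    rw [zero_add, e2] at r2
    have s1 := ha 0
    rw [zero_add] at s1
    have s2 := ha 1
    rw [zero_add]
    exact (huniq (a 0) (a (1 + 1)) (a 1) (a' 0) s1 s2 r1 r2).symm
  · exact hd ι hι
end

section
/- Let C be the Collatz function on positive integers, and let x, y be positive integers with x ≡ y (mod 2ⁿ) for some n ≥ 0. Then for every 0 ≤ k ≤ n one has C^k(x) ≡ C^k(y) (mod 2^{n−k}). In particular, if x ≡ y (mod 2ⁿ) then the parity vectors (x mod 2, C(x) mod 2, …, C^{n−1}(x) mod 2) and (y mod 2, C(y) mod 2, …, C^{n−1}(y) mod 2) coincide. -/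
/-- The Collatz function: `x/2` for even `x` and `(3x+1)/2` for odd `x`. -/
def collatz (x : ℕ) : ℕ := if x % 2 = 0 then x / 2 else (3 * x + 1) / 2

lemma collatz_step (m x y : ℕ) (h : x ≡ y [MOD 2 ^ (m + 1)]) :
    collatz x ≡ collatz y [MOD 2 ^ m] ∧ x % 2 = y % 2 := by
  have hpar : x % 2 = y % 2 := by
    have := h.of_dvd (dvd_pow_self 2 (Nat.succ_ne_zero m))
    simpa [Nat.ModEq, pow_one] using this
  refine ⟨?_, hpar⟩
  unfold collatz
  rw [hpar]
  rcases Nat.even_or_odd y with hy | hy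
  · have hy2 : y % 2 = 0 := Nat.even_iff.mp hy
    rw [hy2]
    simp only [if_pos rfl, if_true]
    have hx2 : x % 2 = 0 := by rw [hpar, hy2]
    apply Nat.ModEq.mul_left_cancel' (c := 2) two_ne_zero
    have h1 : 2 * (x / 2) = x := by omega
    have h2 : 2 * (y / 2) = y := by omega
    rw [h1, h2, ← pow_succ']
    exact h
  · have hy2 : y % 2 = 1 := Nat.odd_iff.mp hy
    rw [hy2]
    simp only [if_neg one_ne_zero]
    have hx2 : x % 2 = 1 := by rw [hpar, hy2]
    apply Nat.ModEq.mul_left_cancel' (c := 2) two_ne_zero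
    have h1 : 2 * ((3 * x + 1) / 2) = 3 * x + 1 := by omega
    have h2 : 2 * ((3 * y + 1) / 2) = 3 * y + 1 := by omega
    rw [h1, h2, ← pow_succ']
    exact (h.mul_left 3).add_right 1

/-- if `x ≡ y (mod 2ⁿ)` for positive integers `x, y`, then
`Cᵏ(x) ≡ Cᵏ(y) (mod 2^{n−k})` for every `0 ≤ k ≤ n`; in particular the parity vectors
of length `n` of `x` and `y` coincide. -/
theorem collatz_iterates_congruent (n : ℕ) (x y : ℕ) (hx : 0 < x) (hy : 0 < y)
    (h : x ≡ y [MOD 2 ^ n]) :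
    (∀ k ≤ n, collatz^[k] x ≡ collatz^[k] y [MOD 2 ^ (n - k)]) ∧
    (∀ k < n, collatz^[k] x % 2 = collatz^[k] y % 2) := by
  have main : ∀ k ≤ n, collatz^[k] x ≡ collatz^[k] y [MOD 2 ^ (n - k)] := by
    intro k hk
    induction k with
    | zero => simpa using h
    | succ k ih =>
      have hk' : k ≤ n := Nat.le_of_succ_le hk
      have h1 := ih hk'
      have hm : n - k = (n - (k + 1)) + 1 := by omega
      rw [hm] at h1
      have := (collatz_step _ _ _ h1).1
      simpa [Function.iterate_succ_apply'] using this
  refine ⟨main, fun k hk => ?_⟩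
  have h1 := main k (le_of_lt hk)
  have hm : n - k = (n - (k + 1)) + 1 := by omega
  rw [hm] at h1
  exact (collatz_step _ _ _ h1).2
end

section
/- Let C be the Collatz function on positive integers. For every n ≥ 1, the map sending a positive integer x to its parity vector (x mod 2, C(x) mod 2, …, C^{n−1}(x) mod 2) ∈ {0,1}ⁿ is surjective; since this parity vector depends only on x modulo 2ⁿ, the induced map from residues modulo 2ⁿ to {0,1}ⁿ is a bijection. -/
theorem Nat.ModEq.div_of_dvd {a b c m : ℕ} (ha : c ∣ a) (hb : c ∣ b) (h : a ≡ b [MOD c * m]) :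
    a / c ≡ b / c [MOD m] := by
  obtain ⟨a, rfl⟩ := ha
  obtain ⟨b, rfl⟩ := hb
  rcases eq_or_ne c 0 with rfl | hc
  · simp [Nat.ModEq.refl]
  · simpa only [Nat.mul_div_cancel_left _ (Nat.pos_of_ne_zero hc)] using
      Nat.ModEq.mul_left_cancel' hc h

theorem collatz_two_mul (y : ℕ) : collatz (2 * y) = y := by
  simp [collatz]

theorem collatz_of_mod_two_eq_one {x : ℕ} (hx : x % 2 = 1) : collatz x = (3 * x + 1) / 2 := by
  simp [collatz, hx]

theorem collatz_modEq {m x y : ℕ} (h : x ≡ y [MOD 2 * m]) : collatz x ≡ collatz y [MOD m] := by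
  have hxy : x % 2 = y % 2 := h.of_mul_right m
  rcases Nat.mod_two_eq_zero_or_one x with hx | hx
  · simp only [collatz, hx, ← hxy, if_true]
    exact h.div_of_dvd (Nat.dvd_of_mod_eq_zero hx) (Nat.dvd_of_mod_eq_zero (hxy ▸ hx))
  · rw [collatz_of_mod_two_eq_one hx, collatz_of_mod_two_eq_one (hxy ▸ hx)]
    exact ((h.mul_left 3).add_right 1).div_of_dvd (by omega) (by omega)

theorem iterate_collatz_modEq (k : ℕ) {m x y : ℕ} (h : x ≡ y [MOD 2 ^ k * m]) :
    collatz^[k] x ≡ collatz^[k] y [MOD m] := by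
  induction k generalizing x y with
  | zero => simpa using h
  | succ k ih =>
    simp only [Function.iterate_succ_apply]
    exact ih (collatz_modEq (by rwa [pow_succ', mul_assoc] at h))

/-- The parity vector `(x mod 2, C(x) mod 2, …, C^{n-1}(x) mod 2)`. -/
def parityVector (n x : ℕ) : Fin n → ZMod 2 := fun k => (collatz^[k] x : ZMod 2)

theorem parityVector_eq_of_modEq {n x y : ℕ} (h : x ≡ y [MOD 2 ^ n]) :
    parityVector n x = parityVector n y := by
  funext k
  rw [parityVector, parityVector, ZMod.natCast_eq_natCast_iff]
  have h' : x ≡ y [MOD 2 ^ k.val * 2 ^ (n - k)] := by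
    rwa [← pow_add, Nat.add_sub_cancel' k.isLt.le]
  exact (iterate_collatz_modEq k h').of_dvd (dvd_pow_self 2 (Nat.sub_ne_zero_of_lt k.isLt))

theorem parityVector_succ (n x : ℕ) :
    parityVector (n + 1) x = Fin.cons (x : ZMod 2) (parityVector n (collatz x)) := by
  funext k
  refine Fin.cases rfl (fun i => ?_) k
  simp [parityVector, Function.iterate_succ_apply]

theorem exists_odd_collatz_modEq {y : ℕ} (hy : 0 < y) (n : ℕ) :
    ∃ x, x % 2 = 1 ∧ collatz x ≡ y [MOD 2 ^ n] := by
  have hcop : Nat.Coprime 3 (2 * 2 ^ n) := by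
    rw [← pow_succ']
    exact Nat.Coprime.pow_right _ (by norm_num)
  obtain ⟨x, -, hx⟩ := Nat.exists_mul_mod_eq_of_coprime (2 * y - 1) hcop (by positivity)
  have h : 3 * x + 1 ≡ 2 * y [MOD 2 * 2 ^ n] := by
    simpa [Nat.sub_add_cancel (by omega : 1 ≤ 2 * y)] using Nat.ModEq.add_right 1 hx
  have hodd : x % 2 = 1 := by
    have := h.of_mul_right (2 ^ n)
    simp only [Nat.ModEq] at this
    omega
  refine ⟨x, hodd, ?_⟩
  rw [collatz_of_mod_two_eq_one hodd]
  simpa using h.div_of_dvd (by omega) (dvd_mul_right 2 y)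

theorem exists_collatz_modEq (b : ZMod 2) {y : ℕ} (hy : 0 < y) (n : ℕ) :
    ∃ x : ℕ, 0 < x ∧ (x : ZMod 2) = b ∧ collatz x ≡ y [MOD 2 ^ n] := by
  fin_cases b
  · refine ⟨2 * y, by omega, ?_, by rw [collatz_two_mul]⟩
    rw [← ZMod.natCast_mod, Nat.mul_mod_right, Nat.cast_zero]
    rfl
  · obtain ⟨x, hodd, hx⟩ := exists_odd_collatz_modEq hy n
    refine ⟨x, by omega, ?_, hx⟩
    rw [← ZMod.natCast_mod, hodd, Nat.cast_one]
    rfl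

theorem exists_pos_parityVector_eq (n : ℕ) (v : Fin n → ZMod 2) :
    ∃ x, 0 < x ∧ parityVector n x = v := by
  induction n with
  | zero => exact ⟨1, one_pos, funext fun k => k.elim0⟩
  | succ n ih =>
    obtain ⟨y, hy, hyv⟩ := ih (Fin.tail v)
    obtain ⟨x, hx, hx0, hxy⟩ := exists_collatz_modEq (v 0) hy n
    refine ⟨x, hx, ?_⟩
    rw [parityVector_succ, hx0, parityVector_eq_of_modEq hxy, hyv, Fin.cons_self_tail]

theorem parityVector_mod_bijective (n : ℕ) :
    Function.Bijective (fun r : ZMod (2 ^ n) => parityVector n (r.val + 2 ^ n)) := by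
  refine (Fintype.bijective_iff_surjective_and_card _).2 ⟨fun v => ?_, by simp [ZMod.card]⟩
  obtain ⟨x, -, rfl⟩ := exists_pos_parityVector_eq n v
  refine ⟨x, parityVector_eq_of_modEq ?_⟩
  simp [ZMod.val_natCast, Nat.ModEq]

theorem collatz_parity_vector_bijective_general (n : ℕ) :
    (∀ v : Fin n → ZMod 2, ∃ x : ℕ, 0 < x ∧
      ∀ k : Fin n, ((collatz^[k.val] x : ℕ) : ZMod 2) = v k) ∧
    (∀ x y : ℕ, 0 < x → 0 < y → x ≡ y [MOD 2 ^ n] →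
      ∀ k : Fin n, ((collatz^[k.val] x : ℕ) : ZMod 2) = ((collatz^[k.val] y : ℕ) : ZMod 2)) ∧
    Function.Bijective (fun r : ZMod (2 ^ n) =>
      fun k : Fin n => ((collatz^[k.val] (r.val + 2 ^ n) : ℕ) : ZMod 2)) := by
  refine ⟨fun v => ?_, fun x y _ _ h => congrFun (parityVector_eq_of_modEq h),
    parityVector_mod_bijective n⟩
  obtain ⟨x, hx, hxv⟩ := exists_pos_parityVector_eq n v
  exact ⟨x, hx, congrFun hxv⟩

/-- for `n ≥ 1`, the map sending a positive integer `x` to its parity vector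
`(x mod 2, C(x) mod 2, …, C^{n−1}(x) mod 2)` is surjective; the parity vector depends only
on `x` modulo `2ⁿ`; and the induced map from residues modulo `2ⁿ` to `{0,1}ⁿ`
(evaluated on the positive representatives `r + 2ⁿ`) is a bijection. -/
theorem collatz_parity_vector_bijective (n : ℕ) (hn : 1 ≤ n) :
    (∀ v : Fin n → ZMod 2, ∃ x : ℕ, 0 < x ∧
      ∀ k : Fin n, ((collatz^[k.val] x : ℕ) : ZMod 2) = v k) ∧
    (∀ x y : ℕ, 0 < x → 0 < y → x ≡ y [MOD 2 ^ n] →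
      ∀ k : Fin n, ((collatz^[k.val] x : ℕ) : ZMod 2) = ((collatz^[k.val] y : ℕ) : ZMod 2)) ∧
    Function.Bijective (fun r : ZMod (2 ^ n) =>
      fun k : Fin n => ((collatz^[k.val] (r.val + 2 ^ n) : ℕ) : ZMod 2)) :=
  collatz_parity_vector_bijective_general n
end

section
/- Let A be an alphabet (any set). Define the linear slider transition relation on functions a : ℤ → A by: a ↝ a′ if and only if a′(i) = a(i + 1) for all i ∈ ℤ with i ≠ 0 (the value a′(0) is arbitrary). If a and b lie in the same weakly connected component of the resulting digraph on A^ℤ (i.e., b can be reached from a by a finite chain of linear slider transitions and their reversals), then there exists Δ ∈ ℤ such that the set {i ∈ ℤ : a(i + Δ) ≠ b(i)} is finite; that is, a and b are semi-synchronously asymptotically equivalent. -/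
/-- The linear slider transition relation on bilateral sequences: `a ↝ a′` iff
`a′(i) = a(i + 1)` for all `i ≠ 0` (the value `a′(0)` is arbitrary). -/
def linearSliderTrans {A : Type*} (a a' : ℤ → A) : Prop :=
  ∀ i : ℤ, i ≠ 0 → a' i = a (i + 1)

/-- if two bilateral sequences lie in the same weakly connected component of
the linear slider digraph (i.e., one is reachable from the other by a finite chain of
linear slider transitions and their reversals), then they are semi-synchronously
asymptotically equivalent: some shift of `a` agrees with `b` outside a finite set. -/
theorem weakly_connected_implies_semiSynchronous
    {A : Type*} (a b : ℤ → A)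
    (h : Relation.ReflTransGen
      (fun u v : ℤ → A => linearSliderTrans u v ∨ linearSliderTrans v u) a b) :
    ∃ Δ : ℤ, {i : ℤ | a (i + Δ) ≠ b i}.Finite := by
  induction h with
  | refl => exact ⟨0, Set.Finite.subset (Set.finite_empty) (by simp)⟩
  | tail _ huv ih =>
    rename_i u v _
    obtain ⟨Δ, hΔ⟩ := ih
    rcases huv with hf | hb
    · refine ⟨Δ + 1, Set.Finite.subset
        ((hΔ.preimage (Set.injOn_of_injective (add_left_injective 1))).union
          (Set.finite_singleton 0)) ?_⟩
      intro i hi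
      by_cases h0 : i = 0
      · exact Or.inr h0
      · left
        simp only [Set.mem_preimage, Set.mem_setOf_eq]
        intro hc
        exact hi (by rw [hf i h0, ← hc]; ring_nf)
    · refine ⟨Δ - 1, Set.Finite.subset
        ((hΔ.preimage (Set.injOn_of_injective (fun x y h => by simpa using h : Function.Injective (fun i : ℤ => i - 1)))).union
          (Set.finite_singleton 1)) ?_⟩
      intro i hi
      by_cases h0 : i = 1
      · exact Or.inr h0
      · left
        simp only [Set.mem_preimage, Set.mem_setOf_eq]
        intro hc
        apply hi
        have := hb (i - 1) (by omega)
        rw [show i - 1 + 1 = i by ring] at this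
        rw [← this, ← hc]
        ring_nf
end
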